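/- arXiv:1903.00094 — 4 statements merged into one kernel-verified Lean document; each statement's English description precedes it below -/
import Mathlib

section
/- Let φ : [0,∞) → [0,∞) be continuously differentiable and suppose there exist r₀ > 0 and a non-increasing function Φ : (r₀,∞) → [0,∞) with φ(r) ≥ Φ(r) for all r > r₀ and ∫_{r₀}^∞ Φ(r) dr = ∞. Then any global solution (x_i, v_i)_{i=1}^N of the Cucker–Smale system on ℝ^d defined for all t ≥ 0 aligns in the fourth-order variation: V₄(t) → 0 as t → ∞. -/
/-!
The velocity variation `E = ∑ᵢⱼ ‖vᵢ - vⱼ‖²` is non-increasing, `E' = -2D` with the dissipation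
`D = ∑ᵢⱼ φ(‖xᵢ - xⱼ‖) ‖vᵢ - vⱼ‖²`, so it has a limit `L ≥ 0`. Suppose `L > 0`. The virial
`W = ∑ᵢⱼ ⟪xᵢ - xⱼ, vᵢ - vⱼ⟫ + Ψ(‖xᵢ - xⱼ‖²)`, where `Ψ' (s) = φ(√s) / 2`, satisfies `W' = E ≥ L`
while it is bounded on flocks of bounded diameter; hence the diameter eventually exceeds `4 r₀`.
Velocity differences are bounded by `c = √E(0)`, so `‖xᵢ - xⱼ‖ ≤ c t + A`, and then every pair is
coupled with weight at least `Φ(c t + A)`, directly or through a particle far from both. This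
gives `Φ(c t + A) E ≤ 4 N² D`, hence `L ∫ Φ(c t + A) dt ≤ 2 N² E(0)`, contradicting the fat tail
of `Φ`. Finally `V₄ ≤ N⁻² E²`.
-/

open MeasureTheory Filter Set Finset
open scoped RealInnerProductSpace Topology

noncomputable section

lemma monotoneOn_Ici_of_hasDerivAt_nonneg {f f' : ℝ → ℝ} {a : ℝ}
    (hf : ∀ t, a ≤ t → HasDerivAt f (f' t) t) (hf' : ∀ t, a ≤ t → 0 ≤ f' t) :
    MonotoneOn f (Ici a) :=
  monotoneOn_of_hasDerivWithinAt_nonneg (convex_Ici a)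
    (fun t ht => (hf t ht).continuousAt.continuousWithinAt)
    (fun t ht => (hf t (interior_subset ht)).hasDerivWithinAt)
    (fun t ht => hf' t (interior_subset ht))

lemma bddAbove_image_Ioi_of_antitoneOn {Φ φ : ℝ → ℝ} {a : ℝ} (hΦ : AntitoneOn Φ (Ioi a))
    (hφ : ContinuousOn φ (Icc a (a + 1))) (hle : ∀ r ∈ Ioc a (a + 1), Φ r ≤ φ r) :
    BddAbove (Φ '' Ioi a) := by
  obtain ⟨M, hM⟩ := isCompact_Icc.bddAbove_image hφ
  have hφM : ∀ r ∈ Ioc a (a + 1), Φ r ≤ M :=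
    fun r hr => (hle r hr).trans (hM (mem_image_of_mem φ (Ioc_subset_Icc_self hr)))
  have ha : a + 1 ∈ Ioc a (a + 1) := ⟨lt_add_one a, le_rfl⟩
  refine ⟨M, forall_mem_image.2 fun r hr => ?_⟩
  rcases le_or_gt r (a + 1) with hr' | hr'
  · exact hφM r ⟨hr, hr'⟩
  · exact (hΦ ha.1 hr hr'.le).trans (hφM _ ha)

section Antitone

variable {Φ : ℝ → ℝ} {a : ℝ} (hΦ : AntitoneOn Φ (Ioi a)) (hnn : ∀ r, a < r → 0 ≤ Φ r)
  (hbdd : BddAbove (Φ '' Ioi a))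
include hΦ hnn hbdd

lemma AntitoneOn.integrableOn_Ioc_of_bddAbove {b c : ℝ} (hb : a ≤ b) :
    IntegrableOn Φ (Ioc b c) := by
  obtain ⟨M, hM⟩ := hbdd
  have hsub : Ioc b c ⊆ Ioi a := fun r hr => hb.trans_lt hr.1
  refine Integrable.of_bound
    (aemeasurable_restrict_of_antitoneOn measurableSet_Ioc (hΦ.mono hsub)).aestronglyMeasurable
    M ?_
  filter_upwards [ae_restrict_mem measurableSet_Ioc] with r hr
  rw [Real.norm_of_nonneg (hnn r (hsub hr))]
  exact hM (mem_image_of_mem Φ (hsub hr))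

lemma AntitoneOn.integrableOn_Ioi_of_integral_le {B C : ℝ} (haB : a < B)
    (hint : ∀ b, B ≤ b → ∫ r in B..b, Φ r ≤ C) : IntegrableOn Φ (Ioi a) := by
  have htail : IntegrableOn Φ (Ioi B) := by
    refine integrableOn_Ioi_of_intervalIntegral_norm_bounded C B
      (fun b => hΦ.integrableOn_Ioc_of_bddAbove hnn hbdd haB.le) tendsto_id ?_
    filter_upwards [eventually_ge_atTop B] with b hb
    have hnorm : EqOn (fun r => ‖Φ r‖) Φ (uIcc B b) := fun r hr =>
      Real.norm_of_nonneg (hnn r (haB.trans_le (by rw [uIcc_of_le hb] at hr; exact hr.1)))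
    exact (intervalIntegral.integral_congr hnorm).trans_le (hint b hb)
  rw [← Ioc_union_Ioi_eq_Ioi haB.le]
  exact (hΦ.integrableOn_Ioc_of_bddAbove hnn hbdd le_rfl).union htail

lemma AntitoneOn.integrableOn_Ioi_of_integral_comp_mul_add_le {c A T₀ C : ℝ} (hc : 0 < c)
    (hA : a < c * T₀ + A) (hint : ∀ T, T₀ ≤ T → ∫ t in T₀..T, Φ (c * t + A) ≤ C) :
    IntegrableOn Φ (Ioi a) := by
  refine hΦ.integrableOn_Ioi_of_integral_le hnn hbdd hA (C := c * C) fun b hb => ?_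
  have h := hint ((b - A) / c) (by rw [le_div_iff₀ hc]; linarith)
  rwa [intervalIntegral.integral_comp_mul_add _ hc.ne', mul_div_cancel₀ _ hc.ne', sub_add_cancel,
    smul_eq_mul, inv_mul_le_iff₀ hc] at h

end Antitone

lemma integral_le_of_mul_le_of_hasDerivAt {f g β : ℝ → ℝ} {a b K L : ℝ} (hab : a ≤ b)
    (hL : 0 < L) (hf : ∀ t ∈ Icc a b, HasDerivAt f (-g t) t) (hβ : IntegrableOn β (Icc a b))
    (hβnn : ∀ t ∈ Icc a b, 0 ≤ β t) (hLf : ∀ t ∈ Icc a b, L ≤ f t)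
    (hβf : ∀ t ∈ Icc a b, β t * f t ≤ K * g t) :
    ∫ t in a..b, β t ≤ K / L * (f a - f b) := by
  have hF : ∀ t ∈ Icc a b, HasDerivAt (fun t => -(K / L) * f t) (K / L * g t) t :=
    fun t ht => ((hf t ht).const_mul _).congr_deriv (by ring)
  have h := intervalIntegral.integral_le_sub_of_hasDeriv_right_of_le hab
    (fun t ht => (hF t ht).continuousAt.continuousWithinAt)
    (fun t ht => (hF t (Ioo_subset_Icc_self ht)).hasDerivWithinAt) hβ
    (fun t ht => ?_)
  · linarith
  have ht := Ioo_subset_Icc_self ht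
  rw [div_mul_eq_mul_div, le_div_iff₀ hL]
  exact (mul_le_mul_of_nonneg_left (hLf t ht) (hβnn t ht)).trans (hβf t ht)

lemma norm_sub_sq_le_two_mul {E : Type*} [SeminormedAddCommGroup E] (a b c : E) :
    ‖a - b‖ ^ 2 ≤ 2 * (‖a - c‖ ^ 2 + ‖b - c‖ ^ 2) := by
  have h := norm_sub_le_norm_sub_add_norm_sub a c b
  rw [norm_sub_rev c] at h
  exact (pow_le_pow_left₀ (norm_nonneg _) h 2).trans add_sq_le

namespace CuckerSmale

section Configuration

variable {E : Type*} [SeminormedAddCommGroup E] {N : ℕ}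

def velocityVariation (v : Fin N → E) : ℝ :=
  ∑ i, ∑ j, ‖v i - v j‖ ^ 2

def dissipation (φ : ℝ → ℝ) (x v : Fin N → E) : ℝ :=
  ∑ i, ∑ j, φ ‖x i - x j‖ * ‖v i - v j‖ ^ 2

lemma velocityVariation_nonneg (v : Fin N → E) : 0 ≤ velocityVariation v :=
  sum_nonneg fun _ _ => sum_nonneg fun _ _ => by positivity

lemma sq_norm_sub_le_velocityVariation (v : Fin N → E) (i j : Fin N) :
    ‖v i - v j‖ ^ 2 ≤ velocityVariation v :=
  calc ‖v i - v j‖ ^ 2 ≤ ∑ j', ‖v i - v j'‖ ^ 2 :=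
        single_le_sum (f := fun j => ‖v i - v j‖ ^ 2) (fun _ _ => by positivity) (mem_univ j)
    _ ≤ velocityVariation v :=
        single_le_sum (f := fun i => ∑ j, ‖v i - v j‖ ^ 2) (fun _ _ => by positivity) (mem_univ i)

lemma sum_sum_norm_sub_pow_four_le (v : Fin N → E) :
    ∑ i, ∑ j, ‖v i - v j‖ ^ 4 ≤ velocityVariation v ^ 2 := by
  calc ∑ i, ∑ j, ‖v i - v j‖ ^ 4 ≤ ∑ i, ∑ j, velocityVariation v * ‖v i - v j‖ ^ 2 := by
        gcongr with i _ j _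
        rw [show 4 = 2 + 2 by rfl, pow_add]
        gcongr
        exact sq_norm_sub_le_velocityVariation v i j
    _ = velocityVariation v ^ 2 := by
        simp only [← mul_sum]
        rw [sq, velocityVariation]

lemma exists_lt_norm_sub_of_two_mul_lt {x : Fin N → E} {s : ℝ}
    (hfar : ∃ m k, 2 * s < ‖x m - x k‖) (i : Fin N) : ∃ p, s < ‖x i - x p‖ := by
  obtain ⟨m, k, hmk⟩ := hfar
  by_contra! hnear
  have := norm_sub_le_norm_sub_add_norm_sub (x m) (x i) (x k)
  rw [norm_sub_rev (x m) (x i)] at this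
  linarith [hnear m, hnear k]

section Dissipation

variable {φ : ℝ → ℝ} (hφ : ∀ r, 0 ≤ r → 0 ≤ φ r) (x v : Fin N → E)
include hφ

lemma dissipation_nonneg : 0 ≤ dissipation φ x v :=
  sum_nonneg fun i _ => sum_nonneg fun j _ => mul_nonneg (hφ _ (norm_nonneg _)) (by positivity)

lemma single_le_dissipation (i j : Fin N) :
    φ ‖x i - x j‖ * ‖v i - v j‖ ^ 2 ≤ dissipation φ x v := by
  have hterm : ∀ i j, 0 ≤ φ ‖x i - x j‖ * ‖v i - v j‖ ^ 2 :=
    fun i j => mul_nonneg (hφ _ (norm_nonneg _)) (by positivity)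
  calc φ ‖x i - x j‖ * ‖v i - v j‖ ^ 2 ≤ ∑ j, φ ‖x i - x j‖ * ‖v i - v j‖ ^ 2 :=
        single_le_sum (f := fun j => φ ‖x i - x j‖ * ‖v i - v j‖ ^ 2)
          (fun j _ => hterm i j) (mem_univ j)
    _ ≤ dissipation φ x v :=
        single_le_sum (f := fun i => ∑ j, φ ‖x i - x j‖ * ‖v i - v j‖ ^ 2)
          (fun i _ => sum_nonneg fun j _ => hterm i j) (mem_univ i)

lemma mul_velocityVariation_le_dissipation {b r : ℝ} (hb : 0 ≤ b)
    (hbφ : ∀ i j, r < ‖x i - x j‖ → b ≤ φ ‖x i - x j‖) (hfar : ∃ m k, 4 * r < ‖x m - x k‖) :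
    b * velocityVariation v ≤ 4 * N ^ 2 * dissipation φ x v := by
  have hD := dissipation_nonneg hφ x v
  have hfar' : ∀ i j, r < ‖x i - x j‖ → b * ‖v i - v j‖ ^ 2 ≤ dissipation φ x v :=
    fun i j h => (mul_le_mul_of_nonneg_right (hbφ i j h) (by positivity)).trans
      (single_le_dissipation hφ x v i j)
  have hpair : ∀ i j, b * ‖v i - v j‖ ^ 2 ≤ 4 * dissipation φ x v := by
    intro i j
    by_cases hij : r < ‖x i - x j‖
    · linarith [hfar' i j hij]
    obtain ⟨p, hp⟩ := exists_lt_norm_sub_of_two_mul_lt (s := 2 * r)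
      (hfar.imp fun m => Exists.imp fun k h => by linarith) i
    have hjp : r < ‖x j - x p‖ := by
      have := norm_sub_le_norm_sub_add_norm_sub (x i) (x j) (x p)
      linarith
    calc b * ‖v i - v j‖ ^ 2 ≤ 2 * (b * ‖v i - v p‖ ^ 2 + b * ‖v j - v p‖ ^ 2) := by
          nlinarith [norm_sub_sq_le_two_mul (v i) (v j) (v p)]
      _ ≤ 4 * dissipation φ x v := by
          linarith [hfar' i p (by linarith [norm_nonneg (x i - x j)]), hfar' j p hjp]
  calc b * velocityVariation v ≤ ∑ _i : Fin N, ∑ _j : Fin N, 4 * dissipation φ x v := by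
        simp only [velocityVariation, mul_sum]
        exact sum_le_sum fun i _ => sum_le_sum fun j _ => hpair i j
    _ = 4 * N ^ 2 * dissipation φ x v := by
        simp only [sum_const, card_univ, Fintype.card_fin, nsmul_eq_mul]
        ring

end Dissipation

end Configuration

variable {H : Type*} [NormedAddCommGroup H] [InnerProductSpace ℝ H] {N : ℕ}

def force (φ : ℝ → ℝ) (x v : Fin N → H) (i : Fin N) : H :=
  (N : ℝ)⁻¹ • ∑ j, φ ‖x i - x j‖ • (v j - v i)

lemma sum_sum_inner_sub_sub (y F : Fin N → H) :
    ∑ i, ∑ j, ⟪y i - y j, F i - F j⟫ = 2 * (N * ∑ i, ⟪y i, F i⟫ - ⟪∑ i, y i, ∑ i, F i⟫) := by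
  simp only [inner_sub_left, inner_sub_right, sum_sub_distrib, sum_const, card_univ,
    Fintype.card_fin, nsmul_eq_mul, sum_inner, inner_sum, ← mul_sum]
  rw [sum_comm (f := fun i j => ⟪y j, F i⟫)]
  ring

lemma sum_sum_smul_sub_eq_zero {c : Fin N → Fin N → ℝ} (hc : ∀ i j, c i j = c j i)
    (v : Fin N → H) : ∑ i, ∑ j, c i j • (v j - v i) = 0 := by
  simp only [smul_sub, sum_sub_distrib]
  rw [sub_eq_zero, sum_comm]
  simp only [hc]

lemma two_mul_sum_sum_inner_smul_sub {c : Fin N → Fin N → ℝ} (hc : ∀ i j, c i j = c j i)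
    (y v : Fin N → H) :
    2 * ∑ i, ⟪y i, ∑ j, c i j • (v j - v i)⟫ = -∑ i, ∑ j, c i j * ⟪y i - y j, v i - v j⟫ := by
  have hswap : ∑ i, ∑ j, c i j * ⟪y i, v j - v i⟫ = ∑ i, ∑ j, c i j * ⟪y j, v i - v j⟫ := by
    rw [sum_comm]
    simp only [hc]
  simp only [inner_sum, real_inner_smul_right]
  rw [two_mul]
  nth_rewrite 2 [hswap]
  simp only [← sum_add_distrib, ← sum_neg_distrib, inner_sub_left, inner_sub_right]
  congr! 2
  ring

lemma sum_sum_inner_sub_force_sub (φ : ℝ → ℝ) (x v y : Fin N → H) :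
    ∑ i, ∑ j, ⟪y i - y j, force φ x v i - force φ x v j⟫ =
      -∑ i, ∑ j, φ ‖x i - x j‖ * ⟪y i - y j, v i - v j⟫ := by
  rcases N.eq_zero_or_pos with rfl | hN
  · simp
  have hc : ∀ i j, φ ‖x i - x j‖ = φ ‖x j - x i‖ := fun i j => by rw [norm_sub_rev]
  simp only [force, ← smul_sub, real_inner_smul_right, ← mul_sum]
  rw [sum_sum_inner_sub_sub, sum_sum_smul_sub_eq_zero hc, inner_zero_right, sub_zero,
    ← two_mul_sum_sum_inner_smul_sub hc]
  field_simp

def potential (φ : ℝ → ℝ) (u : ℝ) : ℝ :=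
  ∫ s in 0..u, φ √s / 2

section Potential

variable {φ : ℝ → ℝ} (hφ : ContinuousOn φ (Ici 0))
include hφ

lemma hasDerivAt_potential (u : ℝ) : HasDerivAt (potential φ) (φ √u / 2) u :=
  ((hφ.comp_continuous Real.continuous_sqrt Real.sqrt_nonneg).div_const 2
    |>.integral_hasStrictDerivAt 0 u).hasDerivAt

lemma monotone_potential (hφnn : ∀ r, 0 ≤ r → 0 ≤ φ r) : Monotone (potential φ) :=
  monotone_of_hasDerivAt_nonneg (hasDerivAt_potential hφ) fun u =>
    div_nonneg (hφnn _ (Real.sqrt_nonneg u)) zero_le_two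

end Potential

def virial (φ : ℝ → ℝ) (x v : Fin N → H) : ℝ :=
  ∑ i, ∑ j, (⟪x i - x j, v i - v j⟫ + potential φ (‖x i - x j‖ ^ 2))

lemma virial_le {φ : ℝ → ℝ} (hφ : ContinuousOn φ (Ici 0)) (hφnn : ∀ r, 0 ≤ r → 0 ≤ φ r)
    {x v : Fin N → H} {ρ c : ℝ} (hx : ∀ i j, ‖x i - x j‖ ≤ ρ) (hv : ∀ i j, ‖v i - v j‖ ≤ c) :
    virial φ x v ≤ N ^ 2 * (ρ * c + potential φ (ρ ^ 2)) := by
  have hterm : ∀ i j, ⟪x i - x j, v i - v j⟫ + potential φ (‖x i - x j‖ ^ 2) ≤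
      ρ * c + potential φ (ρ ^ 2) := fun i j => add_le_add
    ((real_inner_le_norm _ _).trans
      (mul_le_mul (hx i j) (hv i j) (norm_nonneg _) ((norm_nonneg _).trans (hx i j))))
    (monotone_potential hφ hφnn (pow_le_pow_left₀ (norm_nonneg _) (hx i j) 2))
  calc virial φ x v ≤ ∑ _i : Fin N, ∑ _j : Fin N, (ρ * c + potential φ (ρ ^ 2)) :=
        sum_le_sum fun i _ => sum_le_sum fun j _ => hterm i j
    _ = N ^ 2 * (ρ * c + potential φ (ρ ^ 2)) := by
        simp only [sum_const, card_univ, Fintype.card_fin, nsmul_eq_mul]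
        ring

structure IsSolution (φ : ℝ → ℝ) (x v : Fin N → ℝ → H) : Prop where
  hasDerivAt_x : ∀ i t, 0 ≤ t → HasDerivAt (x i) (v i t) t
  hasDerivAt_v : ∀ i t, 0 ≤ t → HasDerivAt (v i) (force φ (x · t) (v · t) i) t

namespace IsSolution

variable {φ : ℝ → ℝ} {x v : Fin N → ℝ → H} (hs : IsSolution φ x v)
include hs

lemma hasDerivAt_velocityVariation {t : ℝ} (ht : 0 ≤ t) :
    HasDerivAt (fun s => velocityVariation (v · s)) (-2 * dissipation φ (x · t) (v · t)) t := by
  have h := HasDerivAt.fun_sum fun i (_ : i ∈ Finset.univ) =>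
    HasDerivAt.fun_sum fun j (_ : j ∈ Finset.univ) =>
      ((hs.hasDerivAt_v i t ht).fun_sub (hs.hasDerivAt_v j t ht)).norm_sq
  refine h.congr_deriv ?_
  simp only [← mul_sum, sum_sum_inner_sub_force_sub, dissipation, real_inner_self_eq_norm_sq]
  ring

lemma hasDerivAt_virial (hφ : ContinuousOn φ (Ici 0)) {t : ℝ} (ht : 0 ≤ t) :
    HasDerivAt (fun s => virial φ (x · s) (v · s)) (velocityVariation (v · t)) t := by
  have h := HasDerivAt.fun_sum fun i (_ : i ∈ Finset.univ) =>
    HasDerivAt.fun_sum fun j (_ : j ∈ Finset.univ) =>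
      have hz := (hs.hasDerivAt_x i t ht).fun_sub (hs.hasDerivAt_x j t ht)
      (hz.inner ℝ ((hs.hasDerivAt_v i t ht).fun_sub (hs.hasDerivAt_v j t ht))).add
        ((hasDerivAt_potential hφ _).comp t hz.norm_sq)
  have hhalf (a b : ℝ) : a / 2 * (2 * b) = a * b := by ring
  refine h.congr_deriv ?_
  simp only [sum_add_distrib, sum_sum_inner_sub_force_sub, real_inner_self_eq_norm_sq,
    Real.sqrt_sq (norm_nonneg _), hhalf, velocityVariation]
  ring

lemma antitoneOn_velocityVariation (hφnn : ∀ r, 0 ≤ r → 0 ≤ φ r) :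
    AntitoneOn (fun t => velocityVariation (v · t)) (Ici 0) := by
  have hneg := monotoneOn_Ici_of_hasDerivAt_nonneg
    (fun t ht => (hs.hasDerivAt_velocityVariation ht).neg)
    (fun t _ => by linarith [dissipation_nonneg hφnn (x · t) (v · t)])
  exact fun a ha b hb hab => neg_le_neg_iff.1 (hneg ha hb hab)

lemma norm_sub_le_sqrt_velocityVariation (hφnn : ∀ r, 0 ≤ r → 0 ≤ φ r) {t : ℝ} (ht : 0 ≤ t)
    (i j : Fin N) : ‖v i t - v j t‖ ≤ √(velocityVariation (v · 0)) :=
  Real.le_sqrt_of_sq_le <| (sq_norm_sub_le_velocityVariation _ i j).trans <|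
    hs.antitoneOn_velocityVariation hφnn self_mem_Ici ht ht

lemma norm_sub_le_add_mul {c : ℝ} (hv : ∀ t, 0 ≤ t → ∀ i j, ‖v i t - v j t‖ ≤ c) {t : ℝ}
    (ht : 0 ≤ t) (i j : Fin N) : ‖x i t - x j t‖ ≤ ‖x i 0 - x j 0‖ + c * t := by
  have hdisp := norm_image_sub_le_of_norm_deriv_le_segment' (f := fun s => x i s - x j s)
    (fun s hst => ((hs.hasDerivAt_x i s hst.1).sub (hs.hasDerivAt_x j s hst.1)).hasDerivWithinAt)
    (fun s hst => hv s hst.1 i j) t ⟨ht, le_rfl⟩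
  rw [sub_zero] at hdisp
  exact (norm_le_norm_add_norm_sub' _ _).trans (add_le_add_right hdisp _)

lemma exists_norm_sub_le_mul_add {c : ℝ} (hv : ∀ t, 0 ≤ t → ∀ i j, ‖v i t - v j t‖ ≤ c)
    (a : ℝ) : ∃ A, a < A ∧ ∀ t, 0 ≤ t → ∀ i j, ‖x i t - x j t‖ ≤ c * t + A := by
  obtain ⟨R, hR⟩ := Finite.bddAbove_range fun p : Fin N × Fin N => ‖x p.1 0 - x p.2 0‖
  refine ⟨max R a + 1, by linarith [le_max_right R a], fun t ht i j => ?_⟩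
  linarith [hs.norm_sub_le_add_mul hv ht i j, hR ⟨(i, j), rfl⟩, le_max_left R a]

lemma eventually_exists_lt_norm_sub (hφ : ContinuousOn φ (Ici 0))
    (hφnn : ∀ r, 0 ≤ r → 0 ≤ φ r) {L : ℝ} (hL : 0 < L)
    (hLE : ∀ t, 0 ≤ t → L ≤ velocityVariation (v · t)) (ρ : ℝ) :
    ∀ᶠ t in atTop, ∃ m k, ρ < ‖x m t - x k t‖ := by
  set W := fun t => virial φ (x · t) (v · t)
  have hgrowth : MonotoneOn (fun t => W t - L * t) (Ici 0) :=
    monotoneOn_Ici_of_hasDerivAt_nonneg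
      (fun t ht => (hs.hasDerivAt_virial hφ ht).sub ((hasDerivAt_id t).const_mul L))
      (fun t ht => by linarith [hLE t ht])
  have hW : Tendsto W atTop atTop := by
    refine tendsto_atTop_mono' _ ?_
      (tendsto_atTop_add_const_left _ (W 0) (tendsto_id.const_mul_atTop hL))
    filter_upwards [eventually_ge_atTop 0] with t ht
    have := hgrowth self_mem_Ici ht ht
    simp only [mul_zero, sub_zero, id] at this ⊢
    linarith
  filter_upwards [hW.eventually_gt_atTop (N ^ 2 * (ρ * √(velocityVariation (v · 0)) +
    potential φ (ρ ^ 2))), eventually_ge_atTop 0] with t hWt ht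
  by_contra! hnear
  exact (virial_le hφ hφnn hnear (hs.norm_sub_le_sqrt_velocityVariation hφnn ht)).not_gt hWt

theorem exists_velocityVariation_lt (hφ : ContinuousOn φ (Ici 0))
    (hφnn : ∀ r, 0 ≤ r → 0 ≤ φ r) {Φ : ℝ → ℝ} {r₀ : ℝ} (hr₀ : 0 < r₀)
    (hΦanti : AntitoneOn Φ (Ioi r₀)) (hΦnn : ∀ r, r₀ < r → 0 ≤ Φ r)
    (hΦle : ∀ r, r₀ < r → Φ r ≤ φ r) (hfat : ¬IntegrableOn Φ (Ioi r₀)) {L : ℝ} (hL : 0 < L) :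
    ∃ t, 0 ≤ t ∧ velocityVariation (v · t) < L := by
  by_contra! hLE
  set c := √(velocityVariation (v · 0))
  have hc : 0 < c := Real.sqrt_pos.2 (hL.trans_le (hLE 0 le_rfl))
  obtain ⟨A, hr₀A, hxA⟩ := hs.exists_norm_sub_le_mul_add
    (fun t ht => hs.norm_sub_le_sqrt_velocityVariation hφnn ht) r₀
  have hA : ∀ t, 0 ≤ t → r₀ < c * t + A := fun t ht => by nlinarith
  obtain ⟨T₀, hT₀⟩ := ((hs.eventually_exists_lt_norm_sub hφ hφnn hL hLE (4 * r₀)).and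
    (eventually_ge_atTop 0)).exists_forall_of_atTop
  have hβE : ∀ t, T₀ ≤ t → Φ (c * t + A) * velocityVariation (v · t) ≤
      2 * N ^ 2 * (2 * dissipation φ (x · t) (v · t)) := fun t ht => by
    have hcoupled : ∀ i j, r₀ < ‖x i t - x j t‖ → Φ (c * t + A) ≤ φ ‖x i t - x j t‖ :=
      fun i j hij => (hΦanti hij (hA t (hT₀ t ht).2) (hxA t (hT₀ t ht).2 i j)).trans
        (hΦle _ hij)
    linarith [mul_velocityVariation_le_dissipation hφnn (x · t) (v · t)
      (hΦnn _ (hA t (hT₀ t ht).2)) hcoupled (hT₀ t ht).1]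
  have hT₀nn : 0 ≤ T₀ := (hT₀ T₀ le_rfl).2
  have hint : ∀ T, T₀ ≤ T →
      ∫ t in T₀..T, Φ (c * t + A) ≤ 2 * N ^ 2 / L * velocityVariation (v · T₀) := by
    intro T hT
    have hmem : ∀ t ∈ Icc T₀ T, 0 ≤ t := fun t ht => hT₀nn.trans ht.1
    have hβint : IntegrableOn (fun t => Φ (c * t + A)) (Icc T₀ T) :=
      AntitoneOn.integrableOn_isCompact isCompact_Icc fun s hs t ht hst =>
        hΦanti (hA s (hmem s hs)) (hA t (hmem t ht)) (by gcongr)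
    refine (integral_le_of_mul_le_of_hasDerivAt hT hL
      (fun t ht => (hs.hasDerivAt_velocityVariation (hmem t ht)).congr_deriv (neg_mul _ _))
      hβint (fun t ht => hΦnn _ (hA t (hmem t ht))) (fun t ht => hLE t (hmem t ht))
      (fun t ht => hβE t ht.1)).trans ?_
    gcongr
    linarith [velocityVariation_nonneg (v · T)]
  exact hfat (hΦanti.integrableOn_Ioi_of_integral_comp_mul_add_le hΦnn
    (bddAbove_image_Ioi_of_antitoneOn hΦanti (hφ.mono fun r hr => hr₀.le.trans hr.1)
      fun r hr => hΦle r hr.1) hc (hA T₀ hT₀nn) hint)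

theorem tendsto_velocityVariation_atTop_zero (hφ : ContinuousOn φ (Ici 0))
    (hφnn : ∀ r, 0 ≤ r → 0 ≤ φ r) {Φ : ℝ → ℝ} {r₀ : ℝ} (hr₀ : 0 < r₀)
    (hΦanti : AntitoneOn Φ (Ioi r₀)) (hΦnn : ∀ r, r₀ < r → 0 ≤ Φ r)
    (hΦle : ∀ r, r₀ < r → Φ r ≤ φ r) (hfat : ¬IntegrableOn Φ (Ioi r₀)) :
    Tendsto (fun t => velocityVariation (v · t)) atTop (𝓝 0) := by
  refine tendsto_order.2 ⟨fun a ha => Eventually.of_forall fun t =>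
    ha.trans_le (velocityVariation_nonneg _), fun L hL => ?_⟩
  obtain ⟨t₀, ht₀, hlt⟩ :=
    hs.exists_velocityVariation_lt hφ hφnn hr₀ hΦanti hΦnn hΦle hfat hL
  filter_upwards [eventually_ge_atTop t₀] with t ht
  exact (hs.antitoneOn_velocityVariation hφnn ht₀ (ht₀.trans ht) ht).trans_lt hlt

end IsSolution

end CuckerSmale

end

theorem cucker_smale_alignment_V4_Rd_general
    (d : ℕ) (φ Φ : ℝ → ℝ) (r₀ : ℝ) (hr₀ : 0 < r₀)
    (hφC1 : ContDiffOn ℝ 1 φ (Set.Ici 0))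
    (hφnn : ∀ r, 0 ≤ r → 0 ≤ φ r)
    (hΦanti : AntitoneOn Φ (Set.Ioi r₀))
    (hΦnn : ∀ r, r₀ < r → 0 ≤ Φ r)
    (hΦle : ∀ r, r₀ < r → Φ r ≤ φ r)
    (hfat : ¬ IntegrableOn Φ (Set.Ioi r₀))
    (N : ℕ)
    (x v : Fin N → ℝ → EuclideanSpace ℝ (Fin d))
    (hx : ∀ i t, 0 ≤ t → HasDerivAt (x i) (v i t) t)
    (hv : ∀ i t, 0 ≤ t → HasDerivAt (v i)
        ((N : ℝ)⁻¹ • ∑ j, φ (‖x i t - x j t‖) • (v j t - v i t)) t) :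
    Tendsto (fun t : ℝ => ((N : ℝ))⁻¹ ^ 2 * ∑ i, ∑ j, ‖v i t - v j t‖ ^ 4)
      atTop (nhds 0) := by
  have hsol : CuckerSmale.IsSolution φ x v := ⟨hx, hv⟩
  have hE := hsol.tendsto_velocityVariation_atTop_zero hφC1.continuousOn hφnn hr₀ hΦanti hΦnn
    hΦle hfat
  refine squeeze_zero (fun t => by positivity) (fun t => mul_le_mul_of_nonneg_left
    (CuckerSmale.sum_sum_norm_sub_pow_four_le (v · t)) (by positivity)) ?_
  simpa only [zero_pow two_ne_zero, mul_zero] using (hE.pow 2).const_mul ((N : ℝ)⁻¹ ^ 2)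

/-- **Alignment on ℝᵈ, fourth-order variation (Theorem 1.1 (ii)).**
If the kernel `φ` is `C¹` on `[0,∞)` and dominates a non-increasing
fat-tailed function `Φ` beyond some radius `r₀`, then any global solution
of the Cucker–Smale system on ℝᵈ aligns: `V₄(t) → 0`. -/
theorem cucker_smale_alignment_V4_Rd
    (d : ℕ) (φ Φ : ℝ → ℝ) (r₀ : ℝ) (hr₀ : 0 < r₀)
    (hφC1 : ContDiffOn ℝ 1 φ (Set.Ici 0))
    (hφnn : ∀ r, 0 ≤ r → 0 ≤ φ r)
    (hΦanti : AntitoneOn Φ (Set.Ioi r₀))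
    (hΦnn : ∀ r, r₀ < r → 0 ≤ Φ r)
    (hΦle : ∀ r, r₀ < r → Φ r ≤ φ r)
    (hfat : ¬ IntegrableOn Φ (Set.Ioi r₀))
    (N : ℕ) (hN : 1 ≤ N)
    (x v : Fin N → ℝ → EuclideanSpace ℝ (Fin d))
    (hx : ∀ i t, 0 ≤ t → HasDerivAt (x i) (v i t) t)
    (hv : ∀ i t, 0 ≤ t → HasDerivAt (v i)
        ((N : ℝ)⁻¹ • ∑ j, φ (‖x i t - x j t‖) • (v j t - v i t)) t) :
    Tendsto (fun t : ℝ => ((N : ℝ))⁻¹ ^ 2 * ∑ i, ∑ j, ‖v i t - v j t‖ ^ 4)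
      atTop (nhds 0) :=
  cucker_smale_alignment_V4_Rd_general d φ Φ r₀ hr₀ hφC1 hφnn hΦanti hΦnn hΦle hfat N x v hx hv
end

section
/- Let φ : [0,∞) → [0,∞) be continuous (or let the solution be collisionless when φ is only continuous on (0,∞)), and let (x_i, v_i)_{i=1}^N be a solution of the Cucker–Smale system on ℝ^d on an interval [0,T]. Then for every p ≥ 1 the variation V_p is non-increasing and satisfies, for all 0 ≤ s ≤ t ≤ T, V_p(t) ≤ V_p(s) − (1/N) ∫_s^t I_p(τ) dτ. -/
open MeasureTheory Filter Set

/-!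
For `p < 2` the map `a ↦ ‖a‖ ^ p` is not differentiable at `0`, so we differentiate the
regularized variation `∑ᵢⱼ (‖vᵢ - vⱼ‖² + ε) ^ (p / 2)` instead. Along the flow
`v̇ᵢ = κ ∑ⱼ ψᵢⱼ (vⱼ - vᵢ)` its derivative is `p κ ∑ᵢⱼ ⟪F (vᵢ - vⱼ), Aᵢ - Aⱼ⟫` with
`F a = (‖a‖² + ε) ^ (p / 2 - 1) • a` and `Aᵢ = ∑ₖ ψᵢₖ (vₖ - vᵢ)`. Since `F` is odd and monotone
(it is a multiple of the gradient of a convex function when `p ≥ 1`) and `ψ` is symmetric,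
symmetrizing the triple sum bounds this by
`-p κ ∑ᵢⱼ ψᵢⱼ ⟪F (vᵢ - vⱼ), vᵢ - vⱼ⟫ ≤ -p κ ∑ᵢⱼ ψᵢⱼ (‖vᵢ - vⱼ‖ ^ p - ε ^ (p / 2))`.
Integrating and letting `ε → 0` gives the dissipation inequality, which implies monotonicity
because the dissipation is nonnegative.
-/

namespace CuckerSmale

theorem rpow_le_add_rpow_sub_one_mul_add_rpow {a b q : ℝ} (ha : 0 ≤ a) (hb : 0 < b)
    (hq : 0 ≤ q) : a ^ q ≤ (a + b) ^ (q - 1) * a + b ^ q := by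
  rcases le_total 1 q with hq1 | hq1
  · have h : a ^ (q - 1) ≤ (a + b) ^ (q - 1) :=
      Real.rpow_le_rpow ha (by linarith) (by linarith)
    calc a ^ q = a ^ (q - 1) * a := by
          rw [← Real.rpow_add_one' ha (by linarith), sub_add_cancel]
      _ ≤ (a + b) ^ (q - 1) * a := by gcongr
      _ ≤ _ := le_add_of_nonneg_right (by positivity)
  · have hab : 0 < a + b := by linarith
    calc a ^ q ≤ (a + b) ^ q := Real.rpow_le_rpow ha (by linarith) hq
      _ = (a + b) ^ (q - 1) * a + (a + b) ^ (q - 1) * b := by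
          rw [← mul_add, ← Real.rpow_add_one hab.ne', sub_add_cancel]
      _ ≤ (a + b) ^ (q - 1) * a + b ^ (q - 1) * b := by
          gcongr (a + b) ^ (q - 1) * a + ?_ * b
          exact Real.rpow_le_rpow_of_nonpos hb (by linarith) (by linarith)
      _ = (a + b) ^ (q - 1) * a + b ^ q := by
          rw [← Real.rpow_add_one hb.ne', sub_add_cancel]

theorem sq_rpow_half {r : ℝ} (hr : 0 ≤ r) (p : ℝ) : (r ^ 2) ^ (p / 2) = r ^ p := by
  rw [← Real.rpow_natCast_mul hr]
  norm_num
  ring_nf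

theorem monotoneOn_mul_sq_add_rpow {p ε : ℝ} (hp : 1 ≤ p) (hε : 0 < ε) :
    MonotoneOn (fun r : ℝ => r * (r ^ 2 + ε) ^ (p / 2 - 1)) (Ici 0) := by
  have hsq : ∀ r : ℝ, (r * (r ^ 2 + ε) ^ (p / 2 - 1)) ^ 2
      = r ^ 2 / (r ^ 2 + ε) * (r ^ 2 + ε) ^ (p - 1) := by
    intro r
    have hc : 0 < r ^ 2 + ε := by positivity
    rw [mul_pow, ← Real.rpow_mul_natCast hc.le,
      show (p / 2 - 1) * ((2 : ℕ) : ℝ) = p - 1 - 1 by push_cast; ring,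
      Real.rpow_sub_one hc.ne']
    ring
  intro u hu t ht hut
  rw [Set.mem_Ici] at hu ht
  simp only
  rw [← pow_le_pow_iff_left₀ (by positivity) (by positivity) two_ne_zero, hsq, hsq]
  have hfrac : u ^ 2 / (u ^ 2 + ε) ≤ t ^ 2 / (t ^ 2 + ε) := by
    rw [div_le_div_iff₀ (by positivity) (by positivity)]
    nlinarith [mul_le_mul hut hut hu ht]
  gcongr

section Variation

variable {ι E : Type*} [Fintype ι] [SeminormedAddCommGroup E]

noncomputable def regVariation (p ε : ℝ) (u : ι → E) : ℝ :=
  ∑ i, ∑ j, (‖u i - u j‖ ^ 2 + ε) ^ (p / 2)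

theorem regVariation_zero (p : ℝ) (u : ι → E) :
    regVariation p 0 u = ∑ i, ∑ j, ‖u i - u j‖ ^ p := by
  simp only [regVariation, add_zero, sq_rpow_half (norm_nonneg _)]

theorem sum_norm_sub_rpow_le_regVariation {p ε : ℝ} (hp : 0 ≤ p) (hε : 0 ≤ ε) (u : ι → E) :
    ∑ i, ∑ j, ‖u i - u j‖ ^ p ≤ regVariation p ε u := by
  rw [← regVariation_zero]
  unfold regVariation
  gcongr

theorem continuous_regVariation {p : ℝ} (hp : 0 ≤ p) (u : ι → E) :
    Continuous fun ε => regVariation p ε u := by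
  unfold regVariation
  have := Real.continuous_rpow_const (by linarith : 0 ≤ p / 2)
  fun_prop

end Variation

section InnerProductSpace

variable {ι E : Type*} [Fintype ι] [NormedAddCommGroup E] [InnerProductSpace ℝ E]

open scoped RealInnerProductSpace

/-- `p⁻¹` times the gradient of `a ↦ (‖a‖ ^ 2 + ε) ^ (p / 2)`. -/
noncomputable def regGrad (p ε : ℝ) (a : E) : E := (‖a‖ ^ 2 + ε) ^ (p / 2 - 1) • a

theorem regGrad_neg (p ε : ℝ) (a : E) : regGrad p ε (-a) = -regGrad p ε a := by
  simp [regGrad]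

theorem inner_regGrad_self (p ε : ℝ) (a : E) :
    ⟪regGrad p ε a, a⟫ = (‖a‖ ^ 2 + ε) ^ (p / 2 - 1) * ‖a‖ ^ 2 := by
  rw [regGrad, real_inner_smul_left, real_inner_self_eq_norm_sq]

theorem inner_regGrad_sub_regGrad_nonneg {p ε : ℝ} (hp : 1 ≤ p) (hε : 0 < ε) (a b : E) :
    0 ≤ ⟪regGrad p ε a - regGrad p ε b, a - b⟫ := by
  set α := (‖a‖ ^ 2 + ε) ^ (p / 2 - 1)
  set β := (‖b‖ ^ 2 + ε) ^ (p / 2 - 1)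
  have hαβ : 0 ≤ α + β := by positivity
  have hexpand : ⟪regGrad p ε a - regGrad p ε b, a - b⟫
      = α * ‖a‖ ^ 2 + β * ‖b‖ ^ 2 - (α + β) * ⟪a, b⟫ := by
    simp only [regGrad, inner_sub_left, inner_sub_right, real_inner_smul_left,
      real_inner_self_eq_norm_sq, real_inner_comm a b]
    ring
  have hmono : 0 ≤ (‖a‖ * α - ‖b‖ * β) * (‖a‖ - ‖b‖) := by
    have h := monotoneOn_mul_sq_add_rpow hp hε
    rcases le_total ‖a‖ ‖b‖ with hab | hab
    · have := h (norm_nonneg a) (norm_nonneg b) hab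
      exact mul_nonneg_of_nonpos_of_nonpos (by linarith) (by linarith)
    · have := h (norm_nonneg b) (norm_nonneg a) hab
      exact mul_nonneg (by linarith) (by linarith)
  rw [hexpand]
  nlinarith [mul_le_mul_of_nonneg_left (real_inner_le_norm a b) hαβ]

theorem norm_rpow_sub_le_inner_regGrad {p ε : ℝ} (hp : 0 ≤ p) (hε : 0 < ε) (a : E) :
    ‖a‖ ^ p - ε ^ (p / 2) ≤ ⟪regGrad p ε a, a⟫ := by
  rw [inner_regGrad_self, ← sq_rpow_half (norm_nonneg a)]
  linarith [rpow_le_add_rpow_sub_one_mul_add_rpow (sq_nonneg ‖a‖) hε (by linarith : 0 ≤ p / 2)]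

theorem _root_.HasDerivAt.sq_norm_add_rpow {w : ℝ → E} {w' : E} {t : ℝ}
    (hw : HasDerivAt w w' t) (p : ℝ) {ε : ℝ} (hε : 0 < ε) :
    HasDerivAt (fun τ => (‖w τ‖ ^ 2 + ε) ^ (p / 2)) (p * ⟪regGrad p ε (w t), w'⟫) t := by
  refine ((hw.norm_sq.add_const ε).rpow_const (Or.inl (by positivity))).congr_deriv ?_
  rw [regGrad, real_inner_smul_left]
  ring

theorem hasDerivAt_regVariation {v : ι → ℝ → E} {v' : ι → E} {t : ℝ}
    (hv : ∀ i, HasDerivAt (v i) (v' i) t) (p : ℝ) {ε : ℝ} (hε : 0 < ε) :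
    HasDerivAt (fun τ => regVariation p ε fun i => v i τ)
      (p * ∑ i, ∑ j, ⟪regGrad p ε (v i t - v j t), v' i - v' j⟫) t := by
  simp only [regVariation, Finset.mul_sum]
  exact HasDerivAt.fun_sum fun i _ => HasDerivAt.fun_sum fun j _ =>
    ((hv i).sub (hv j)).sq_norm_add_rpow p hε

theorem two_mul_sum_sum_inner_eq (G u : ι → E) (b : ι → ι → ℝ)
    (hb : ∀ i k, b i k = b k i) :
    2 * ∑ i, ∑ k, b i k * ⟪G i, u k - u i⟫ = -∑ i, ∑ k, b i k * ⟪G i - G k, u i - u k⟫ := by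
  rw [two_mul]
  nth_rw 2 [Finset.sum_comm]
  simp only [← Finset.sum_add_distrib, ← Finset.sum_neg_distrib]
  refine Finset.sum_congr rfl fun i _ => Finset.sum_congr rfl fun k _ => ?_
  rw [hb k i, inner_sub_left, ← neg_sub (u i) (u k), inner_neg_right]
  ring

theorem sum_inner_sub_eq_two_mul (F : E → E) (hF_neg : ∀ a, F (-a) = -F a) (u A : ι → E) :
    ∑ i, ∑ j, ⟪F (u i - u j), A i - A j⟫ = 2 * ∑ i, ∑ j, ⟪F (u i - u j), A i⟫ := by
  have hanti : ∑ i, ∑ j, ⟪F (u i - u j), A j⟫ = -∑ i, ∑ j, ⟪F (u i - u j), A i⟫ := by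
    rw [Finset.sum_comm]
    simp only [← Finset.sum_neg_distrib, ← inner_neg_left, ← hF_neg, neg_sub]
  simp only [inner_sub_right, Finset.sum_sub_distrib, hanti]
  ring

theorem sum_inner_sub_sum_le (F : E → E) (hF_neg : ∀ a, F (-a) = -F a)
    (hF_mono : ∀ a b, 0 ≤ ⟪F a - F b, a - b⟫) (u : ι → E) (b : ι → ι → ℝ)
    (hb_symm : ∀ i j, b i j = b j i) (hb_nonneg : ∀ i j, 0 ≤ b i j) :
    ∑ i, ∑ j, ⟪F (u i - u j), (∑ k, b i k • (u k - u i)) - ∑ k, b j k • (u k - u j)⟫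
      ≤ -∑ i, ∑ j, b i j * ⟪F (u i - u j), u i - u j⟫ := by
  have hF_zero : F 0 = 0 := by
    have h : F 0 = -F 0 := by simpa using hF_neg 0
    have h2 : (2 : ℝ) • F 0 = 0 := by rw [two_smul]; nth_rw 1 [h]; exact neg_add_cancel _
    exact (smul_eq_zero.mp h2).resolve_left two_ne_zero
  have hexpand : ∑ i, ∑ j, ⟪F (u i - u j), ∑ k, b i k • (u k - u i)⟫
      = ∑ j, ∑ i, ∑ k, b i k * ⟪F (u i - u j), u k - u i⟫ := by
    rw [Finset.sum_comm]
    simp only [inner_sum, real_inner_smul_right]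
  have hsymm : ∀ j, 2 * ∑ i, ∑ k, b i k * ⟪F (u i - u j), u k - u i⟫
      = -∑ i, ∑ k, b i k * ⟪F (u i - u j) - F (u k - u j), (u i - u j) - (u k - u j)⟫ := by
    intro j
    simp only [sub_sub_sub_cancel_right]
    exact two_mul_sum_sum_inner_eq (fun i => F (u i - u j)) u b hb_symm
  have hdiag : ∀ j, ∑ i, b i j * ⟪F (u i - u j), u i - u j⟫
      ≤ ∑ i, ∑ k, b i k * ⟪F (u i - u j) - F (u k - u j), (u i - u j) - (u k - u j)⟫ := by
    intro j
    refine Finset.sum_le_sum fun i _ => ?_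
    convert Finset.single_le_sum
      (f := fun k => b i k * ⟪F (u i - u j) - F (u k - u j), (u i - u j) - (u k - u j)⟫)
      (fun k _ => mul_nonneg (hb_nonneg i k) (hF_mono _ _)) (Finset.mem_univ j) using 1
    simp [hF_zero]
  calc ∑ i, ∑ j, ⟪F (u i - u j), (∑ k, b i k • (u k - u i)) - ∑ k, b j k • (u k - u j)⟫
      = ∑ j, 2 * ∑ i, ∑ k, b i k * ⟪F (u i - u j), u k - u i⟫ := by
        rw [sum_inner_sub_eq_two_mul F hF_neg u, hexpand, Finset.mul_sum]
    _ = ∑ j, -∑ i, ∑ k, b i k * ⟪F (u i - u j) - F (u k - u j), (u i - u j) - (u k - u j)⟫ := by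
        simp only [hsymm]
    _ ≤ ∑ j, -∑ i, b i j * ⟪F (u i - u j), u i - u j⟫ :=
        Finset.sum_le_sum fun j _ => neg_le_neg (hdiag j)
    _ = -∑ i, ∑ j, b i j * ⟪F (u i - u j), u i - u j⟫ := by
        rw [Finset.sum_neg_distrib, Finset.sum_comm]

theorem sum_inner_regGrad_alignment_le {p ε κ : ℝ} (hp : 1 ≤ p)
    (hε : 0 < ε) (hκ : 0 ≤ κ) (u : ι → E) (b : ι → ι → ℝ) (hb_symm : ∀ i j, b i j = b j i)
    (hb_nonneg : ∀ i j, 0 ≤ b i j) :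
    p * ∑ i, ∑ j, ⟪regGrad p ε (u i - u j),
        κ • ∑ k, b i k • (u k - u i) - κ • ∑ k, b j k • (u k - u j)⟫
      ≤ -(κ * p) * (∑ i, ∑ j, ‖u i - u j‖ ^ p * b i j - ε ^ (p / 2) * ∑ i, ∑ j, b i j) := by
  have halign := sum_inner_sub_sum_le (regGrad p ε) (regGrad_neg p ε)
    (inner_regGrad_sub_regGrad_nonneg hp hε) u b hb_symm hb_nonneg
  have hlow : ∑ i, ∑ j, ‖u i - u j‖ ^ p * b i j - ε ^ (p / 2) * ∑ i, ∑ j, b i j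
      ≤ ∑ i, ∑ j, b i j * ⟪regGrad p ε (u i - u j), u i - u j⟫ := by
    simp only [Finset.mul_sum, ← Finset.sum_sub_distrib]
    gcongr with i _ j _
    rw [← sub_mul, mul_comm]
    exact mul_le_mul_of_nonneg_left
      (norm_rpow_sub_le_inner_regGrad (by linarith) hε _) (hb_nonneg i j)
  simp only [← smul_sub, real_inner_smul_right, ← Finset.mul_sum]
  nlinarith [mul_le_mul_of_nonneg_left (halign.trans (neg_le_neg hlow))
    (mul_nonneg hκ (by linarith : (0 : ℝ) ≤ p))]

theorem regVariation_le_sub_integral {κ p ε s t : ℝ} (hκ : 0 ≤ κ) (hp : 1 ≤ p) (hε : 0 < ε)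
    (hst : s ≤ t) {ψ : ι → ι → ℝ → ℝ} (hψ_symm : ∀ i j τ, ψ i j τ = ψ j i τ)
    (hψ_nonneg : ∀ i j τ, 0 ≤ ψ i j τ) (hψ_cont : ∀ i j, ContinuousOn (ψ i j) (Icc s t))
    {v : ι → ℝ → E}
    (hv : ∀ i, ∀ τ ∈ Icc s t, HasDerivAt (v i) (κ • ∑ j, ψ i j τ • (v j τ - v i τ)) τ) :
    regVariation p ε (fun i => v i t)
      ≤ regVariation p ε (fun i => v i s)
        - κ * p * ((∫ τ in s..t, ∑ i, ∑ j, ‖v i τ - v j τ‖ ^ p * ψ i j τ)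
          - ε ^ (p / 2) * ∫ τ in s..t, ∑ i, ∑ j, ψ i j τ) := by
  have hv_cont : ∀ i, ContinuousOn (v i) (Icc s t) :=
    fun i τ hτ => (hv i τ hτ).continuousAt.continuousWithinAt
  have hW : ContinuousOn (fun τ => ∑ i, ∑ j, ‖v i τ - v j τ‖ ^ p * ψ i j τ) (Icc s t) :=
    continuousOn_finsetSum _ fun i _ => continuousOn_finsetSum _ fun j _ =>
      (((hv_cont i).sub (hv_cont j)).norm.rpow_const fun _ _ => Or.inr (by linarith)).mul
        (hψ_cont i j)
  have hΨ : ContinuousOn (fun τ => ∑ i, ∑ j, ψ i j τ) (Icc s t) :=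
    continuousOn_finsetSum _ fun i _ => continuousOn_finsetSum _ fun j _ => hψ_cont i j
  have hW_int := (uIcc_of_le hst ▸ hW).intervalIntegrable (μ := volume)
  have hΨ_int := (uIcc_of_le hst ▸ hΨ).intervalIntegrable (μ := volume)
  have hderiv : ∀ τ ∈ Icc s t, HasDerivAt (fun τ => regVariation p ε fun i => v i τ) _ τ :=
    fun τ hτ => hasDerivAt_regVariation (fun i => hv i τ hτ) p hε
  have h := intervalIntegral.sub_le_integral_of_hasDeriv_right_of_le hst
    (fun τ hτ => (hderiv τ hτ).continuousAt.continuousWithinAt)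
    (fun τ hτ => (hderiv τ (Ioo_subset_Icc_self hτ)).hasDerivWithinAt)
    ((continuousOn_const.mul (hW.sub (continuousOn_const.mul hΨ))).integrableOn_Icc)
    (fun τ _ => sum_inner_regGrad_alignment_le hp hε hκ (fun i => v i τ) (fun i j => ψ i j τ)
      (fun i j => hψ_symm i j τ) (fun i j => hψ_nonneg i j τ))
  simp only [Pi.mul_apply, Pi.sub_apply] at h
  rw [intervalIntegral.integral_const_mul, intervalIntegral.integral_sub hW_int
    (hΨ_int.const_mul _), intervalIntegral.integral_const_mul] at h
  linarith

theorem sum_norm_sub_rpow_le_sub_integral {κ p s t : ℝ} (hκ : 0 ≤ κ) (hp : 1 ≤ p)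
    (hst : s ≤ t) {ψ : ι → ι → ℝ → ℝ} (hψ_symm : ∀ i j τ, ψ i j τ = ψ j i τ)
    (hψ_nonneg : ∀ i j τ, 0 ≤ ψ i j τ) (hψ_cont : ∀ i j, ContinuousOn (ψ i j) (Icc s t))
    {v : ι → ℝ → E}
    (hv : ∀ i, ∀ τ ∈ Icc s t, HasDerivAt (v i) (κ • ∑ j, ψ i j τ • (v j τ - v i τ)) τ) :
    ∑ i, ∑ j, ‖v i t - v j t‖ ^ p
      ≤ ∑ i, ∑ j, ‖v i s - v j s‖ ^ p
        - κ * p * ∫ τ in s..t, ∑ i, ∑ j, ‖v i τ - v j τ‖ ^ p * ψ i j τ := by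
  set bound : ℝ → ℝ := fun ε => regVariation p ε (fun i => v i s)
    - κ * p * ((∫ τ in s..t, ∑ i, ∑ j, ‖v i τ - v j τ‖ ^ p * ψ i j τ)
      - ε ^ (p / 2) * ∫ τ in s..t, ∑ i, ∑ j, ψ i j τ)
  have hbound : Continuous bound := by
    have := Real.continuous_rpow_const (by linarith : 0 ≤ p / 2)
    have := continuous_regVariation (by linarith : 0 ≤ p) fun i => v i s
    fun_prop
  have hle : ∀ ε ∈ Ioi (0 : ℝ), ∑ i, ∑ j, ‖v i t - v j t‖ ^ p ≤ bound ε := fun ε hε =>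
    (sum_norm_sub_rpow_le_regVariation (by linarith) (le_of_lt hε) _).trans
      (regVariation_le_sub_integral hκ hp hε hst hψ_symm hψ_nonneg hψ_cont hv)
  have h0 := ge_of_tendsto (hbound.tendsto 0 |>.mono_left nhdsWithin_le_nhds)
    (eventually_nhdsWithin_of_forall (s := Ioi 0) hle)
  simpa [bound, regVariation_zero, Real.zero_rpow (by linarith : p / 2 ≠ 0)] using h0

end InnerProductSpace

end CuckerSmale

theorem cucker_smale_Vp_monotone_general
    (d N : ℕ) (φ : ℝ → ℝ)
    (hφcont : ContinuousOn φ (Set.Ici 0))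
    (hφnn : ∀ r : ℝ, 0 ≤ r → 0 ≤ φ r)
    (T : ℝ)
    (x v : Fin N → ℝ → EuclideanSpace ℝ (Fin d))
    (hx : ∀ i, ∀ t ∈ Set.Icc 0 T, HasDerivAt (x i) (v i t) t)
    (hv : ∀ i, ∀ t ∈ Set.Icc 0 T, HasDerivAt (v i)
        ((N : ℝ)⁻¹ • ∑ j, φ (‖x i t - x j t‖) • (v j t - v i t)) t) :
    ∀ p : ℝ, 1 ≤ p →
      AntitoneOn (fun t => ((N : ℝ))⁻¹ ^ 2 * ∑ i, ∑ j, ‖v i t - v j t‖ ^ p)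
        (Set.Icc 0 T) ∧
      ∀ s t : ℝ, 0 ≤ s → s ≤ t → t ≤ T →
        ((N : ℝ))⁻¹ ^ 2 * ∑ i, ∑ j, ‖v i t - v j t‖ ^ p
          ≤ ((N : ℝ))⁻¹ ^ 2 * ∑ i, ∑ j, ‖v i s - v j s‖ ^ p -
            (N : ℝ)⁻¹ * ∫ τ in s..t,
              p * ((N : ℝ))⁻¹ ^ 2 * ∑ i, ∑ j,
                ‖v i τ - v j τ‖ ^ p * φ (‖x i τ - x j τ‖) := by
  intro p hp
  have hx_cont : ∀ i, ContinuousOn (x i) (Set.Icc 0 T) :=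
    fun i τ hτ => (hx i τ hτ).continuousAt.continuousWithinAt
  refine (and_iff_right_of_imp fun hdecay s hs t ht hst => ?_).2 fun s t hs hst htT => ?_
  · have hdissip : 0 ≤ ∫ τ in s..t, p * ((N : ℝ))⁻¹ ^ 2 * ∑ i, ∑ j,
        ‖v i τ - v j τ‖ ^ p * φ (‖x i τ - x j τ‖) :=
      intervalIntegral.integral_nonneg hst fun τ _ => mul_nonneg (by positivity) <|
        Finset.sum_nonneg fun i _ => Finset.sum_nonneg fun j _ =>
          mul_nonneg (by positivity) (hφnn _ (norm_nonneg _))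
    have := hdecay s t hs.1 hst ht.2
    simp only
    nlinarith [inv_nonneg.2 (Nat.cast_nonneg N : (0 : ℝ) ≤ N)]
  · have hsub : Set.Icc s t ⊆ Set.Icc 0 T := Set.Icc_subset_Icc hs htT
    have h := CuckerSmale.sum_norm_sub_rpow_le_sub_integral (ψ := fun i j τ => φ ‖x i τ - x j τ‖)
      (by positivity : (0 : ℝ) ≤ (N : ℝ)⁻¹) hp hst
      (fun i j τ => by rw [norm_sub_rev]) (fun i j τ => hφnn _ (norm_nonneg _))
      (fun i j => hφcont.comp (((hx_cont i).sub (hx_cont j)).norm.mono hsub)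
        fun τ _ => norm_nonneg _)
      (fun i τ hτ => hv i τ (hsub hτ))
    rw [intervalIntegral.integral_const_mul]
    linarith [mul_le_mul_of_nonneg_left h (by positivity : (0 : ℝ) ≤ (N : ℝ)⁻¹ ^ 2)]

/-- **Monotonicity of the variations `V_p` (eq. (2.1) of the paper).**
For a continuous nonneg kernel, along any solution of the Cucker–Smale system
on `[0,T]`, for every `p ≥ 1` the variation
`V_p(t) = N⁻² ∑_{i,j} |v_i − v_j|^p` is non-increasing and satisfies
`V_p(t) ≤ V_p(s) − (1/N) ∫ₛᵗ I_p(τ) dτ`, where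
`I_p = p N⁻² ∑_{i,j} |v_i − v_j|^p φ(|x_i − x_j|)`. -/
theorem cucker_smale_Vp_monotone
    (d N : ℕ) (hN : 1 ≤ N) (φ : ℝ → ℝ)
    (hφcont : ContinuousOn φ (Set.Ici 0))
    (hφnn : ∀ r : ℝ, 0 ≤ r → 0 ≤ φ r)
    (T : ℝ) (hT : 0 ≤ T)
    (x v : Fin N → ℝ → EuclideanSpace ℝ (Fin d))
    (hx : ∀ i, ∀ t ∈ Set.Icc 0 T, HasDerivAt (x i) (v i t) t)
    (hv : ∀ i, ∀ t ∈ Set.Icc 0 T, HasDerivAt (v i)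
        ((N : ℝ)⁻¹ • ∑ j, φ (‖x i t - x j t‖) • (v j t - v i t)) t) :
    ∀ p : ℝ, 1 ≤ p →
      AntitoneOn (fun t => ((N : ℝ))⁻¹ ^ 2 * ∑ i, ∑ j, ‖v i t - v j t‖ ^ p)
        (Set.Icc 0 T) ∧
      ∀ s t : ℝ, 0 ≤ s → s ≤ t → t ≤ T →
        ((N : ℝ))⁻¹ ^ 2 * ∑ i, ∑ j, ‖v i t - v j t‖ ^ p
          ≤ ((N : ℝ))⁻¹ ^ 2 * ∑ i, ∑ j, ‖v i s - v j s‖ ^ p -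
            (N : ℝ)⁻¹ * ∫ τ in s..t,
              p * ((N : ℝ))⁻¹ ^ 2 * ∑ i, ∑ j,
                ‖v i τ - v j τ‖ ^ p * φ (‖x i τ - x j τ‖) :=
  cucker_smale_Vp_monotone_general d N φ hφcont hφnn T x v hx hv
end

section
/- Fix β > 1 and consider the reduced two-agent system: differentiable functions x, v : [0,∞) → ℝ with x(t) > 0 for all t, satisfying ẋ = v and v̇ = −v/(2^β x^β). Then the quantity K = v(t) − x(t)^{1−β}/((β−1) 2^β) is conserved in time, and if initially v(0) − x(0)^{1−β}/((β−1) 2^β) = K > 0, then v(t) ≥ K > 0 for all t ≥ 0; in particular the two agents never align. -/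
open Filter

/-!
Along the reduced system, `d/dt x^{1-β} = (1-β) x^{-β} v`, which is `(β-1) 2^β v̇`; hence
`v - x^{1-β}/((β-1) 2^β)` has zero derivative and is conserved. Since `x > 0` and `β > 1` the
subtracted term is positive, so `v` stays above the conserved value.
-/

theorem hasDerivAt_sub_rpow_div_of_damped {x v : ℝ → ℝ} {β c t : ℝ} (hβ : β ≠ 1)
    (hxt : 0 < x t) (hx : HasDerivAt x (v t) t)
    (hv : HasDerivAt v (-(v t) / (c * x t ^ β)) t) :
    HasDerivAt (fun s => v s - x s ^ (1 - β) / ((β - 1) * c)) 0 t := by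
  have hpow : HasDerivAt (fun s => x s ^ (1 - β)) (v t * (1 - β) * x t ^ (1 - β - 1)) t :=
    hx.rpow_const (Or.inl hxt.ne')
  refine (hv.sub (hpow.div_const ((β - 1) * c))).congr_deriv ?_
  have hβ' : β - 1 ≠ 0 := sub_ne_zero.mpr hβ
  rw [show 1 - β - 1 = -β by ring, Real.rpow_neg hxt.le]
  field_simp
  ring

theorem eq_of_hasDerivAt_zero_of_nonneg {f : ℝ → ℝ} (hf : ∀ t, 0 ≤ t → HasDerivAt f 0 t)
    {t : ℝ} (ht : 0 ≤ t) : f t = f 0 :=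
  constant_of_has_deriv_right_zero
    (fun s hs => (hf s hs.1).continuousAt.continuousWithinAt)
    (fun s hs => (hf s hs.1).hasDerivWithinAt) t (Set.right_mem_Icc.mpr ht)

/-- **Permanent misalignment for fat-tail-violating kernels (Introduction).**
For the reduced two-agent system `ẋ = v`, `v̇ = −v/(2^β x^β)` with `β > 1` and
`x > 0`, the quantity `K = v + x^{1−β}/((β−1)2^β)` (equivalently
`v − x^{1−β}/((1−β)2^β)`) is conserved, and if `K > 0` initially then
`v(t) ≥ K > 0` for all `t ≥ 0`: the two agents never align. -/
theorem two_agent_misalignment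
    (β : ℝ) (hβ : 1 < β)
    (x v : ℝ → ℝ)
    (hxpos : ∀ t : ℝ, 0 ≤ t → 0 < x t)
    (hx : ∀ t : ℝ, 0 ≤ t → HasDerivAt x (v t) t)
    (hv : ∀ t : ℝ, 0 ≤ t → HasDerivAt v (-(v t) / (2 ^ β * x t ^ β)) t)
    (K : ℝ) (hK : v 0 - x 0 ^ (1 - β) / ((β - 1) * 2 ^ β) = K) :
    (∀ t : ℝ, 0 ≤ t → v t - x t ^ (1 - β) / ((β - 1) * 2 ^ β) = K) ∧
    (0 < K → ∀ t : ℝ, 0 ≤ t → K ≤ v t) := by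
  have hconserved : ∀ t : ℝ, 0 ≤ t → v t - x t ^ (1 - β) / ((β - 1) * 2 ^ β) = K := by
    intro t ht
    rw [← hK]
    exact eq_of_hasDerivAt_zero_of_nonneg (fun s hs =>
      hasDerivAt_sub_rpow_div_of_damped hβ.ne' (hxpos s hs) (hx s hs) (hv s hs)) ht
  refine ⟨hconserved, fun _ t ht => ?_⟩
  have hterm : 0 ≤ x t ^ (1 - β) / ((β - 1) * 2 ^ β) := by
    have := hxpos t ht
    have : (0 : ℝ) < β - 1 := sub_pos.mpr hβ
    positivity
  linarith [hconserved t ht]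
end

section
/- Fix 0 < β < 1 and consider the reduced two-agent system: differentiable functions x, v : [0,T) → ℝ with x(t) > 0, satisfying ẋ = v and v̇ = −v/(2^β x^β). Then the quantity K = v(t) + x(t)^{1−β}/((1−β) 2^β) is conserved, and if K < 0 then v(t) ≤ K < 0 for all t, so x(t) ≤ x(0) + K t; consequently the solution cannot be extended with x > 0 beyond time x(0)/|K|, i.e., the two agents collide in finite time. -/
open Set

/-!
Differentiating `v + x^{1-β}/((1-β)2^β)` along the system, the term `x^{-β} ẋ / 2^β` coming from
the power cancels the damping `-v/(2^β x^β)`, so this quantity `K` is conserved. Since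
`x^{1-β} > 0` and `β < 1`, conservation gives `v ≤ K`; integrating `ẋ = v ≤ K` gives
`x(t) ≤ x(0) + K t`, and when `K < 0` the right-hand side vanishes at `t = x(0)/|K|`, which
`x > 0` forbids before time `T`.
-/

section IntervalCalculus

variable {f f' : ℝ → ℝ} {a b : ℝ}

theorem continuousOn_Icc_of_hasDerivAt_Ico (hf : ∀ t ∈ Ico a b, HasDerivAt f (f' t) t)
    {t : ℝ} (ht : t < b) : ContinuousOn f (Icc a t) := fun s hs =>
  (hf s ⟨hs.1, hs.2.trans_lt ht⟩).continuousAt.continuousWithinAt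

theorem eq_of_hasDerivAt_zero_Ico (hf : ∀ t ∈ Ico a b, HasDerivAt f 0 t) :
    ∀ t ∈ Ico a b, f t = f a := fun t ht =>
  constant_of_has_deriv_right_zero (continuousOn_Icc_of_hasDerivAt_Ico hf ht.2)
    (fun s hs => (hf s ⟨hs.1, hs.2.trans ht.2⟩).hasDerivWithinAt) t ⟨ht.1, le_rfl⟩

theorem le_add_mul_of_hasDerivAt_le_Ico (hf : ∀ t ∈ Ico a b, HasDerivAt f (f' t) t) {C : ℝ}
    (hC : ∀ t ∈ Ico a b, f' t ≤ C) : ∀ t ∈ Ico a b, f t ≤ f a + C * (t - a) := by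
  intro t ht
  have hB : ∀ s, HasDerivAt (fun s => f a + C * (s - a)) C s := fun s => by
    simpa using ((hasDerivAt_id s).sub_const a).const_mul C |>.const_add (f a)
  refine image_le_of_deriv_right_le_deriv_boundary (continuousOn_Icc_of_hasDerivAt_Ico hf ht.2)
    (fun s hs => (hf s ⟨hs.1, hs.2.trans ht.2⟩).hasDerivWithinAt) (by simp)
    (fun s _ => (hB s).continuousAt.continuousWithinAt) (fun s _ => (hB s).hasDerivWithinAt)
    (fun s hs => hC s ⟨hs.1, hs.2.trans ht.2⟩) ⟨ht.1, le_rfl⟩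

end IntervalCalculus

theorem le_div_abs_of_forall_pos_add_mul {c K T : ℝ} (hK : K < 0) (hT : 0 < T)
    (h : ∀ t ∈ Ico 0 T, 0 < c + K * t) : T ≤ c / |K| := by
  by_contra! hlt
  have hc : 0 < c := by simpa using h 0 ⟨le_rfl, hT⟩
  have hzero : c + K * (c / |K|) = 0 := by
    rw [abs_of_neg hK]
    field_simp [hK.ne]
    ring
  exact (h _ ⟨by positivity, hlt⟩).ne' hzero

theorem hasDerivAt_cuckerSmale_invariant {β : ℝ} (hβ : β ≠ 1) {x v : ℝ → ℝ} {t : ℝ}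
    (hxpos : 0 < x t) (hx : HasDerivAt x (v t) t)
    (hv : HasDerivAt v (-(v t) / (2 ^ β * x t ^ β)) t) :
    HasDerivAt (fun s => v s + x s ^ (1 - β) / ((1 - β) * 2 ^ β)) 0 t := by
  have h1β : 1 - β ≠ 0 := sub_ne_zero.mpr hβ.symm
  have hpow : x t ^ (1 - β - 1) = (x t ^ β)⁻¹ := by
    rw [sub_sub_cancel_left, Real.rpow_neg hxpos.le]
  refine (hv.add (((hx.rpow_const (Or.inl hxpos.ne')).div_const ((1 - β) * 2 ^ β)))).congr_deriv ?_
  rw [hpow]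
  have : 0 < x t ^ β := Real.rpow_pos_of_pos hxpos β
  field_simp
  ring

theorem two_agent_finite_time_collision_general
    (β : ℝ) (hβ1 : β < 1)
    (T : ℝ) (hT : 0 < T)
    (x v : ℝ → ℝ)
    (hxpos : ∀ t ∈ Set.Ico (0:ℝ) T, 0 < x t)
    (hx : ∀ t ∈ Set.Ico (0:ℝ) T, HasDerivAt x (v t) t)
    (hv : ∀ t ∈ Set.Ico (0:ℝ) T, HasDerivAt v (-(v t) / (2 ^ β * x t ^ β)) t)
    (K : ℝ) (hK : v 0 + x 0 ^ (1 - β) / ((1 - β) * 2 ^ β) = K) :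
    (∀ t ∈ Set.Ico (0:ℝ) T, v t + x t ^ (1 - β) / ((1 - β) * 2 ^ β) = K) ∧
    (K < 0 →
      (∀ t ∈ Set.Ico (0:ℝ) T, v t ≤ K) ∧
      (∀ t ∈ Set.Ico (0:ℝ) T, x t ≤ x 0 + K * t) ∧
      T ≤ x 0 / |K|) := by
  have hconserved : ∀ t ∈ Ico 0 T, v t + x t ^ (1 - β) / ((1 - β) * 2 ^ β) = K := fun t ht =>
    hK ▸ eq_of_hasDerivAt_zero_Ico (fun s hs => hasDerivAt_cuckerSmale_invariant hβ1.ne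
      (hxpos s hs) (hx s hs) (hv s hs)) t ht
  have hv_le : ∀ t ∈ Ico 0 T, v t ≤ K := fun t ht => by
    have : 0 ≤ x t ^ (1 - β) / ((1 - β) * 2 ^ β) :=
      div_nonneg (Real.rpow_nonneg (hxpos t ht).le _) (mul_nonneg (by linarith) (by positivity))
    linarith [hconserved t ht]
  have hx_le : ∀ t ∈ Ico 0 T, x t ≤ x 0 + K * t := by
    simpa using le_add_mul_of_hasDerivAt_le_Ico hx hv_le
  refine ⟨hconserved, fun hKneg => ⟨hv_le, hx_le, ?_⟩⟩
  exact le_div_abs_of_forall_pos_add_mul hKneg hT fun t ht => (hxpos t ht).trans_le (hx_le t ht)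

/-- **Finite-time collision for weakly singular kernels (Example 2.2).**
For the reduced two-agent system `ẋ = v`, `v̇ = −v/(2^β x^β)` with `0 < β < 1`
and `x > 0` on `[0,T)`, the quantity `K = v + x^{1−β}/((1−β)2^β)` is
conserved; if `K < 0` then `v(t) ≤ K < 0` and `x(t) ≤ x(0) + K t` on `[0,T)`,
so the solution cannot be extended with `x > 0` beyond time `x(0)/|K|`:
the agents collide in finite time. -/
theorem two_agent_finite_time_collision
    (β : ℝ) (hβ0 : 0 < β) (hβ1 : β < 1)
    (T : ℝ) (hT : 0 < T)
    (x v : ℝ → ℝ)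
    (hxpos : ∀ t ∈ Set.Ico (0:ℝ) T, 0 < x t)
    (hx : ∀ t ∈ Set.Ico (0:ℝ) T, HasDerivAt x (v t) t)
    (hv : ∀ t ∈ Set.Ico (0:ℝ) T, HasDerivAt v (-(v t) / (2 ^ β * x t ^ β)) t)
    (K : ℝ) (hK : v 0 + x 0 ^ (1 - β) / ((1 - β) * 2 ^ β) = K) :
    (∀ t ∈ Set.Ico (0:ℝ) T, v t + x t ^ (1 - β) / ((1 - β) * 2 ^ β) = K) ∧
    (K < 0 →
      (∀ t ∈ Set.Ico (0:ℝ) T, v t ≤ K) ∧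
      (∀ t ∈ Set.Ico (0:ℝ) T, x t ≤ x 0 + K * t) ∧
      T ≤ x 0 / |K|) :=
  two_agent_finite_time_collision_general β hβ1 T hT x v hxpos hx hv K hK
end
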